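/- arXiv:2104.09812 — 2 statements merged into one kernel-verified Lean document; each statement's English description precedes it below -/
import Mathlib

section
/- Let g(u) = u² − 2au + λ|u|^α with a ≠ 0, λ ≥ 0, and 0 < α < 1, and let c_α = (2/(2−α)) · { 2(1−α)/(2−α) }^{1−α}. Then 0 is the unique global minimizer of g over ℝ if and only if λ > c_α |a|^{2−α}. -/
/-!
Only points with `a u > 0` can compete with `0`. For those, with `t = |u|` and `A = |a|`,
`g u > g 0` reads `λ t^α > 2At - t²`. Scaling `t = A s` reduces this to the one-variable bound
`2s - s² ≤ c_α s^α` (with `c_α = thresholdConst α`), which is weighted AM-GM and is an equality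
at `s = criticalRatio α`.
-/

open Real

noncomputable def criticalRatio (α : ℝ) : ℝ := 2 * (1 - α) / (2 - α)

noncomputable def thresholdConst (α : ℝ) : ℝ := 2 / (2 - α) * criticalRatio α ^ (1 - α)

section
variable {α A lam : ℝ}

lemma criticalRatio_pos (hα : α < 1) : 0 < criticalRatio α :=
  div_pos (by linarith) (by linarith)

/-- Weighted AM-GM with weights `1/(2-α)` and `(1-α)/(2-α)` on `x^α` and `x^2`. -/
lemma two_sub_mul_le_rpow_add_one_sub_mul_sq (hα : α ≤ 1) {x : ℝ} (hx : 0 < x) :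
    (2 - α) * x ≤ x ^ α + (1 - α) * x ^ 2 := by
  have h2α : 0 < 2 - α := by linarith
  have amgm := geom_mean_le_arith_mean2_weighted (p₁ := x ^ α) (p₂ := x ^ (2 : ℝ))
    (inv_nonneg.2 h2α.le) (div_nonneg (sub_nonneg.2 hα) h2α.le) (by positivity) (by positivity)
    (by field_simp; ring)
  have geom : (x ^ α) ^ (2 - α)⁻¹ * (x ^ (2 : ℝ)) ^ ((1 - α) / (2 - α)) = x := by
    rw [← rpow_mul hx.le, ← rpow_mul hx.le, ← rpow_add hx]
    convert rpow_one x using 2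
    field_simp
    ring
  rw [geom, rpow_two] at amgm
  calc (2 - α) * x ≤ (2 - α) * ((2 - α)⁻¹ * x ^ α + (1 - α) / (2 - α) * x ^ 2) := by gcongr
    _ = x ^ α + (1 - α) * x ^ 2 := by field_simp

lemma thresholdConst_mul_criticalRatio_rpow (hα : α < 1) :
    thresholdConst α * criticalRatio α ^ α = 2 * criticalRatio α - criticalRatio α ^ 2 := by
  have h2α : 2 - α ≠ 0 := by linarith
  rw [thresholdConst, mul_assoc, ← rpow_add (criticalRatio_pos hα), sub_add_cancel, rpow_one,
    criticalRatio]
  field_simp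
  ring

lemma two_mul_sub_sq_le_thresholdConst_mul_rpow (hα : α < 1) {s : ℝ} (hs : 0 < s) :
    2 * s - s ^ 2 ≤ thresholdConst α * s ^ α := by
  set k := criticalRatio α with hk_def
  have hk : 0 < k := criticalRatio_pos hα
  obtain ⟨x, hx, rfl⟩ : ∃ x > 0, s = k * x := ⟨s / k, div_pos hs hk, by field_simp⟩
  have h2α : 0 < 2 - α := by linarith
  calc 2 * (k * x) - (k * x) ^ 2 = 2 * k / (2 - α) * ((2 - α) * x - (1 - α) * x ^ 2) := by
        rw [hk_def, criticalRatio]; field_simp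
    _ ≤ 2 * k / (2 - α) * x ^ α := by
        gcongr; linarith [two_sub_mul_le_rpow_add_one_sub_mul_sq hα.le hx]
    _ = (2 * k - k ^ 2) * x ^ α := by
        rw [hk_def, criticalRatio]; field_simp; ring
    _ = thresholdConst α * (k * x) ^ α := by
        rw [← thresholdConst_mul_criticalRatio_rpow hα, mul_rpow hk.le hx.le, mul_assoc]

lemma rpow_two_sub_mul_rpow (hA : 0 < A) {t : ℝ} (ht : 0 ≤ t) :
    A ^ (2 - α) * t ^ α = A ^ 2 * (t / A) ^ α := by
  rw [rpow_sub hA, div_rpow ht hA.le, rpow_two]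
  have : A ^ α ≠ 0 := (rpow_pos_of_pos hA α).ne'
  field_simp

lemma sq_sub_two_mul_add_pos (hα : α < 1) (hA : 0 < A)
    (hlam : thresholdConst α * A ^ (2 - α) < lam) {t : ℝ} (ht : 0 < t) :
    0 < t ^ 2 - 2 * A * t + lam * t ^ α := by
  have key : 2 * A * t - t ^ 2 < lam * t ^ α :=
    calc 2 * A * t - t ^ 2 = A ^ 2 * (2 * (t / A) - (t / A) ^ 2) := by field_simp
      _ ≤ A ^ 2 * (thresholdConst α * (t / A) ^ α) := by
        gcongr; exact two_mul_sub_sq_le_thresholdConst_mul_rpow hα (div_pos ht hA)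
      _ = thresholdConst α * (A ^ (2 - α) * t ^ α) := by
        rw [rpow_two_sub_mul_rpow hA ht.le]; ring
      _ < lam * t ^ α := by
        rw [← mul_assoc]; gcongr
  linarith

lemma thresholdConst_mul_rpow_lt (hα : α < 1) (hA : 0 < A)
    (h : 0 < (criticalRatio α * A) ^ 2 - 2 * A * (criticalRatio α * A)
      + lam * (criticalRatio α * A) ^ α) :
    thresholdConst α * A ^ (2 - α) < lam := by
  have ht : 0 < criticalRatio α * A := mul_pos (criticalRatio_pos hα) hA
  have value : thresholdConst α * A ^ (2 - α) * (criticalRatio α * A) ^ α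
      = 2 * A * (criticalRatio α * A) - (criticalRatio α * A) ^ 2 := by
    rw [mul_assoc, rpow_two_sub_mul_rpow hA ht.le, mul_div_cancel_right₀ _ hA.ne',
      mul_left_comm, thresholdConst_mul_criticalRatio_rpow hα]
    ring
  exact lt_of_mul_lt_mul_right (by linarith) (rpow_pos_of_pos ht α).le

end

theorem bridge_univariate_argmin_zero_iff_general
    (a lam α : ℝ) (ha : a ≠ 0) (hα0 : 0 < α) (hα1 : α < 1)
    (g : ℝ → ℝ) (hg : ∀ u : ℝ, g u = u ^ 2 - 2 * a * u + lam * |u| ^ α)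
    (cα : ℝ) (hcα : cα = (2 / (2 - α)) * (2 * (1 - α) / (2 - α)) ^ (1 - α)) :
    (∀ u : ℝ, u ≠ 0 → g 0 < g u) ↔ cα * |a| ^ (2 - α) < lam := by
  have hg0 : g 0 = 0 := by simp [hg, zero_rpow hα0.ne']
  have hA : 0 < |a| := abs_pos.2 ha
  obtain rfl : cα = thresholdConst α := hcα
  constructor
  · intro h
    refine thresholdConst_mul_rpow_lt hα1 hA ?_
    set k := criticalRatio α
    have hk : 0 < k := criticalRatio_pos hα1
    have hka := h (k * a) (mul_ne_zero hk.ne' ha)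
    rw [hg0, hg, abs_mul, abs_of_pos hk] at hka
    linear_combination hka + (2 * k - k ^ 2) * abs_mul_abs_self a
  · intro h u hu
    have hpos := sq_sub_two_mul_add_pos hα1 hA h (abs_pos.2 hu)
    have hau : a * u ≤ |a| * |u| := abs_mul a u ▸ le_abs_self _
    rw [hg0, hg]
    nlinarith [sq_abs u]

/-- Let `g(u) = u² − 2au + λ|u|^α` with `a ≠ 0`, `λ ≥ 0`, `0 < α < 1`,
and let `c_α = (2/(2−α)) · (2(1−α)/(2−α))^{1−α}`.  Then `0` is the unique global minimizer
of `g` on `ℝ` if and only if `λ > c_α |a|^{2−α}`. -/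
theorem bridge_univariate_argmin_zero_iff
    (a lam α : ℝ) (ha : a ≠ 0) (hlam : 0 ≤ lam) (hα0 : 0 < α) (hα1 : α < 1)
    (g : ℝ → ℝ) (hg : ∀ u : ℝ, g u = u ^ 2 - 2 * a * u + lam * |u| ^ α)
    (cα : ℝ) (hcα : cα = (2 / (2 - α)) * (2 * (1 - α) / (2 - α)) ^ (1 - α)) :
    (∀ u : ℝ, u ≠ 0 → g 0 < g u) ↔ cα * |a| ^ (2 - α) < lam :=
  bridge_univariate_argmin_zero_iff_general a lam α ha hα0 hα1 g hg cα hcα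
end

section
/- Fix j and a realization with V_j = n⁻¹ Σ_{i=1}^n W_{ij}² − σ_j² > 0 and εᵀ a_j + n ξ_{nj} ≠ 0, and suppose λ_n > 0 and 0 < α < 1. Then 0 is the unique global minimizer of the univariate function h_j(β) = V_j β² − (2/n)(εᵀ a_j + n ξ_{nj}) β + λ_n |β|^α if and only if φ_n > n^{−1/2} V_j^{(α−1)/(2−α)} |εᵀ a_j + n ξ_{nj}|, where φ_n = c_α^{−1/(2−α)} λ_n^{1/(2−α)} n^{1/2} and c_α = (2/(2−α)) · { 2(1−α)/(2−α) }^{1−α}. -/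
/-!
With `b = |A| / n`, and since `h 0 = 0` while the sign of `β` can be matched to that of `A`,
`0` is the unique minimiser iff `2 b t < V t² + λ t^α` for every `t > 0`, i.e. (dividing by
`t^α`) iff the gain `t^(1-α) (2b - V t)` stays below `λ` on `(0, ∞)`. The substitution
`t = (b / V) u` turns the gain into `b^(2-α) V^(α-1) · u^(1-α) (2 - u)`, and Bernoulli's
inequality for the concave map `u ↦ u^(1-α)` shows that the last factor peaks at
`u = 2(1-α)/(2-α)`, with value exactly `c_α`. So the condition reads
`c_α b^(2-α) V^(α-1) < λ`, which is the stated threshold after taking `(2-α)`-th roots.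
-/

noncomputable def bridgeArgmax (α : ℝ) : ℝ := 2 * (1 - α) / (2 - α)

/-- The constant `c_α`; it is the value of `u ↦ u ^ (1 - α) * (2 - u)` at its maximiser
`bridgeArgmax α`. -/
noncomputable def bridgeConst (α : ℝ) : ℝ := 2 / (2 - α) * bridgeArgmax α ^ (1 - α)

section BridgeGain

variable {α : ℝ}

theorem bridgeArgmax_pos (hα1 : α < 1) : 0 < bridgeArgmax α := by
  unfold bridgeArgmax
  apply div_pos <;> linarith

theorem bridgeConst_pos (hα1 : α < 1) : 0 < bridgeConst α := by
  have := bridgeArgmax_pos hα1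
  have : 0 < 2 - α := by linarith
  unfold bridgeConst
  positivity

theorem bridgeArgmax_rpow_mul_two_sub (hα : α ≠ 2) :
    bridgeArgmax α ^ (1 - α) * (2 - bridgeArgmax α) = bridgeConst α := by
  have h2α : 2 - α ≠ 0 := sub_ne_zero.2 (Ne.symm hα)
  have : 2 - bridgeArgmax α = 2 / (2 - α) := by
    rw [bridgeArgmax]; field_simp; ring
  rw [this, bridgeConst, mul_comm]

theorem rpow_one_sub_mul_two_sub_le_bridgeConst (hα0 : 0 ≤ α) (hα1 : α < 1) {u : ℝ}
    (hu : 0 ≤ u) : u ^ (1 - α) * (2 - u) ≤ bridgeConst α := by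
  rcases le_or_gt 2 u with h2u | hu2
  · have : 0 ≤ u ^ (1 - α) := Real.rpow_nonneg hu _
    nlinarith [bridgeConst_pos hα1]
  set m := bridgeArgmax α with hm
  have hm0 : 0 < m := bridgeArgmax_pos hα1
  have hbern : (u / m) ^ (1 - α) ≤ 1 + (1 - α) * (u / m - 1) := by
    simpa using rpow_one_add_le_one_add_mul_self (s := u / m - 1) (by
      have : 0 ≤ u / m := by positivity
      linarith) (by linarith) (by linarith)
  have hsplit : u ^ (1 - α) = m ^ (1 - α) * (u / m) ^ (1 - α) := by
    rw [← Real.mul_rpow hm0.le (by positivity), mul_div_cancel₀ _ hm0.ne']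
  have hquad : (1 + (1 - α) * (u / m - 1)) * (2 - u) ≤ 2 - m := by
    have h2α : 0 < 2 - α := by linarith
    have h1α : 1 - α ≠ 0 := by linarith
    have hlin : 1 + (1 - α) * (u / m - 1) = α + (2 - α) / 2 * u := by
      rw [hm, bridgeArgmax]; field_simp; ring
    rw [hlin, hm, bridgeArgmax, ← sub_nonneg]
    have : 2 - 2 * (1 - α) / (2 - α) - (α + (2 - α) / 2 * u) * (2 - u)
        = 2 * (1 - α - (2 - α) / 2 * u) ^ 2 / (2 - α) := by
      field_simp; ring
    rw [this]; positivity
  calc u ^ (1 - α) * (2 - u) = m ^ (1 - α) * ((u / m) ^ (1 - α) * (2 - u)) := by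
        rw [hsplit, mul_assoc]
    _ ≤ m ^ (1 - α) * (2 - m) := by
        gcongr
        calc (u / m) ^ (1 - α) * (2 - u) ≤ (1 + (1 - α) * (u / m - 1)) * (2 - u) := by
              gcongr
          _ ≤ 2 - m := hquad
    _ = bridgeConst α := bridgeArgmax_rpow_mul_two_sub (by linarith)

variable {b V t : ℝ}

theorem rpow_one_sub_mul_two_mul_sub_eq_rescale (hb : 0 < b) (hV : 0 < V) (ht : 0 ≤ t) :
    t ^ (1 - α) * (2 * b - V * t) =
      b ^ (2 - α) * V ^ (α - 1) * ((V * t / b) ^ (1 - α) * (2 - V * t / b)) := by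
  have hb2 : b ^ (2 - α) = b ^ (1 - α) * b := by
    rw [← Real.rpow_add_one hb.ne']; ring_nf
  have hV0 : V ^ (α - 1) * V ^ (1 - α) = 1 := by
    rw [← Real.rpow_add hV]; simp
  have hb0 : 0 < b ^ (1 - α) := Real.rpow_pos_of_pos hb _
  rw [Real.div_rpow (by positivity) hb.le, Real.mul_rpow hV.le ht, hb2]
  field_simp
  linear_combination -(t ^ (1 - α) * (2 * b - V * t)) * hV0

theorem rpow_one_sub_mul_two_mul_sub_le (hα0 : 0 ≤ α) (hα1 : α < 1) (hb : 0 < b) (hV : 0 < V)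
    (ht : 0 ≤ t) : t ^ (1 - α) * (2 * b - V * t) ≤ bridgeConst α * b ^ (2 - α) * V ^ (α - 1) := by
  rw [rpow_one_sub_mul_two_mul_sub_eq_rescale hb hV ht]
  calc _ ≤ b ^ (2 - α) * V ^ (α - 1) * bridgeConst α := mul_le_mul_of_nonneg_left
        (rpow_one_sub_mul_two_sub_le_bridgeConst hα0 hα1 (by positivity)) (by positivity)
    _ = _ := by ring

theorem rpow_one_sub_mul_two_mul_sub_of_bridgeArgmax (hα1 : α < 1) (hb : 0 < b) (hV : 0 < V) :
    (bridgeArgmax α * b / V) ^ (1 - α) * (2 * b - V * (bridgeArgmax α * b / V)) =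
      bridgeConst α * b ^ (2 - α) * V ^ (α - 1) := by
  have hm := bridgeArgmax_pos hα1
  rw [rpow_one_sub_mul_two_mul_sub_eq_rescale hb hV (by positivity),
    show V * (bridgeArgmax α * b / V) / b = bridgeArgmax α by field_simp,
    bridgeArgmax_rpow_mul_two_sub (by linarith)]
  ring

end BridgeGain

section BridgeThreshold

variable {α b V lam : ℝ}

theorem two_mul_mul_lt_iff_rpow_mul_lt {t : ℝ} (ht : 0 < t) :
    2 * b * t < V * t ^ 2 + lam * t ^ α ↔ t ^ (1 - α) * (2 * b - V * t) < lam := by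
  have htα : 0 < t ^ α := Real.rpow_pos_of_pos ht α
  have hsplit : t ^ α * (t ^ (1 - α) * (2 * b - V * t)) = 2 * b * t - V * t ^ 2 := by
    rw [← mul_assoc, ← Real.rpow_add ht, add_sub_cancel, Real.rpow_one]; ring
  conv_rhs => rw [← mul_lt_mul_iff_right₀ htα, hsplit]
  constructor <;> intro h <;> linarith

theorem forall_two_mul_mul_lt_iff (hα0 : 0 ≤ α) (hα1 : α < 1) (hb : 0 < b) (hV : 0 < V) :
    (∀ t > 0, 2 * b * t < V * t ^ 2 + lam * t ^ α) ↔
      bridgeConst α * b ^ (2 - α) * V ^ (α - 1) < lam := by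
  refine (forall₂_congr fun (t : ℝ) (ht : t > 0) =>
    two_mul_mul_lt_iff_rpow_mul_lt (b := b) (V := V) (lam := lam) ht).trans ⟨fun h => ?_,
    fun h t ht => (rpow_one_sub_mul_two_mul_sub_le hα0 hα1 hb hV ht.le).trans_lt h⟩
  have hm := bridgeArgmax_pos hα1
  simpa only [rpow_one_sub_mul_two_mul_sub_of_bridgeArgmax hα1 hb hV] using
    h (bridgeArgmax α * b / V) (by positivity)

theorem forall_ne_zero_pos_iff_abs_mul_lt {B : ℝ} :
    (∀ β ≠ 0, 0 < V * β ^ 2 - B * β + lam * |β| ^ α) ↔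
      ∀ t > 0, |B| * t < V * t ^ 2 + lam * t ^ α := by
  constructor
  · intro h t ht
    rcases le_or_gt 0 B with hB | hB
    · have := h t ht.ne'
      rw [abs_of_nonneg hB]
      rw [abs_of_pos ht] at this
      linarith
    · have := h (-t) (neg_ne_zero.2 ht.ne')
      rw [abs_of_neg hB]
      rw [abs_neg, abs_of_pos ht, neg_sq] at this
      linarith
  · intro h β hβ
    have := h |β| (abs_pos.2 hβ)
    have hBβ : B * β ≤ |B| * |β| := by rw [← abs_mul]; exact le_abs_self _
    rw [sq_abs] at this
    linarith

end BridgeThreshold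

theorem inv_sqrt_mul_rpow_mul_lt_iff {n a V c lam α : ℝ} (hn : 0 < n) (ha : 0 ≤ a)
    (hV : 0 < V) (hc : 0 < c) (hlam : 0 ≤ lam) (hα : α < 2) :
    (Real.sqrt n)⁻¹ * V ^ ((α - 1) / (2 - α)) * a <
        c ^ (-(1 / (2 - α))) * lam ^ (1 / (2 - α)) * Real.sqrt n ↔
      c * (a / n) ^ (2 - α) * V ^ (α - 1) < lam := by
  have hr : 0 < 2 - α := by linarith
  have hsqrt : 0 < Real.sqrt n := Real.sqrt_pos.2 hn
  have hx : (Real.sqrt n)⁻¹ * V ^ ((α - 1) / (2 - α)) * a =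
      Real.sqrt n * ((a / n) ^ (2 - α) * V ^ (α - 1)) ^ (1 / (2 - α)) := by
    rw [Real.mul_rpow (by positivity) (by positivity), ← Real.rpow_mul (by positivity),
      mul_one_div_cancel hr.ne', Real.rpow_one, ← Real.rpow_mul hV.le, ← div_eq_mul_one_div]
    field_simp
    rw [Real.sq_sqrt hn.le, mul_comm]
  have hy : c ^ (-(1 / (2 - α))) * lam ^ (1 / (2 - α)) * Real.sqrt n =
      Real.sqrt n * (lam / c) ^ (1 / (2 - α)) := by
    rw [Real.div_rpow hlam hc.le, Real.rpow_neg hc.le]; ring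
  rw [hx, hy, mul_lt_mul_iff_right₀ hsqrt, Real.rpow_lt_rpow_iff (by positivity) (by positivity)
    (by positivity), lt_div_iff₀ hc, mul_comm, mul_assoc]

open Finset

theorem pmsc_marginal_zero_iff_threshold_general
    (n : ℕ) (hn : 0 < n)
    (lam α : ℝ)
    (hlam : 0 < lam) (hα0 : 0 < α) (hα1 : α < 1)
    (A : ℝ) (hAne : A ≠ 0)
    (Vj : ℝ) (hVpos : 0 < Vj)
    (h : ℝ → ℝ)
    (hh : ∀ β : ℝ, h β = Vj * β ^ 2 - 2 / (n : ℝ) * A * β + lam * |β| ^ α)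
    (cα : ℝ) (hcα : cα = (2 / (2 - α)) * (2 * (1 - α) / (2 - α)) ^ (1 - α))
    (φ : ℝ) (hφ : φ = cα ^ (-(1 / (2 - α))) * lam ^ (1 / (2 - α)) * Real.sqrt n) :
    (∀ β : ℝ, β ≠ 0 → h 0 < h β) ↔
      (Real.sqrt n)⁻¹ * Vj ^ ((α - 1) / (2 - α)) * |A| < φ := by
  have hnR : (0 : ℝ) < n := by exact_mod_cast hn
  have hh0 : h 0 = 0 := by simp [hh, Real.zero_rpow hα0.ne']
  have hb : 0 < |A| / n := by positivity
  have hB : |2 / (n : ℝ) * A| = 2 * (|A| / n) := by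
    rw [abs_mul, abs_of_pos (by positivity)]; ring
  have hc : cα = bridgeConst α := hcα
  subst hφ hc
  calc (∀ β : ℝ, β ≠ 0 → h 0 < h β)
      ↔ ∀ β ≠ 0, 0 < Vj * β ^ 2 - 2 / (n : ℝ) * A * β + lam * |β| ^ α := by
        simp only [hh0, hh]
    _ ↔ ∀ t > 0, 2 * (|A| / n) * t < Vj * t ^ 2 + lam * t ^ α := by
        rw [forall_ne_zero_pos_iff_abs_mul_lt, hB]
    _ ↔ bridgeConst α * (|A| / n) ^ (2 - α) * Vj ^ (α - 1) < lam :=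
        forall_two_mul_mul_lt_iff hα0.le hα1 hb hVpos
    _ ↔ _ := (inv_sqrt_mul_rpow_mul_lt_iff hnR (abs_nonneg A) hVpos (bridgeConst_pos hα1)
        hlam.le (by linarith)).symm

/-- For a coordinate `j` with `Vⱼ > 0` and `εᵀaⱼ + n ξ_{nj} ≠ 0`, and
`λₙ > 0`, `0 < α < 1`, the point `0` is the unique global minimizer of
`hⱼ(β) = Vⱼβ² − (2/n)(εᵀaⱼ + n ξ_{nj})β + λₙ|β|^α` if and only if
`φₙ > n^{−1/2} Vⱼ^{(α−1)/(2−α)} |εᵀaⱼ + n ξ_{nj}|`, where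
`φₙ = c_α^{−1/(2−α)} λₙ^{1/(2−α)} n^{1/2}`. -/
theorem pmsc_marginal_zero_iff_threshold
    (n p s : ℕ) (hn : 0 < n) (hs : s ≤ p)
    (X U : Matrix (Fin n) (Fin p) ℝ) (β₀ : Fin p → ℝ) (ε : Fin n → ℝ)
    (σu2 : Fin p → ℝ) (j : Fin p) (lam α : ℝ)
    (hlam : 0 < lam) (hα0 : 0 < α) (hα1 : α < 1)
    (W : Matrix (Fin n) (Fin p) ℝ) (hW : W = X + U)
    (ξj : ℝ)
    (hξj : ξj = (n : ℝ)⁻¹ *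
      ∑ i, (∑ k ∈ univ.filter (fun k : Fin p => (k : ℕ) < s), X i k * β₀ k) * W i j)
    (A : ℝ) (hA : A = (∑ i, ε i * W i j) + n * ξj) (hAne : A ≠ 0)
    (Vj : ℝ) (hVj : Vj = (n : ℝ)⁻¹ * ∑ i, W i j ^ 2 - σu2 j) (hVpos : 0 < Vj)
    (h : ℝ → ℝ)
    (hh : ∀ β : ℝ, h β = Vj * β ^ 2 - 2 / (n : ℝ) * A * β + lam * |β| ^ α)
    (cα : ℝ) (hcα : cα = (2 / (2 - α)) * (2 * (1 - α) / (2 - α)) ^ (1 - α))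
    (φ : ℝ) (hφ : φ = cα ^ (-(1 / (2 - α))) * lam ^ (1 / (2 - α)) * Real.sqrt n) :
    (∀ β : ℝ, β ≠ 0 → h 0 < h β) ↔
      (Real.sqrt n)⁻¹ * Vj ^ ((α - 1) / (2 - α)) * |A| < φ :=
  pmsc_marginal_zero_iff_threshold_general n hn lam α hlam hα0 hα1 A hAne Vj hVpos h hh cα hcα φ hφ
end
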